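/- arXiv:1412.0728 — 4 statements merged into one kernel-verified Lean document; each statement's English description precedes it below -/
import Mathlib

section
/- Let r = (r_1, ..., r_m) be a sequence of positive reals and h, p, q positive integers. If m = 2^(Σ_{k=0}^{p-1} h^k + Σ_{k=0}^{q-1} h^k), then there exists a strictly increasing sequence of indices 0 ≤ i_0 < i_1 < ... < i_t ≤ m with t ≥ p such that the sums s_τ = Σ_{k=i_{τ-1}+1}^{i_τ} r_k satisfy h·s_τ ≤ s_{τ+1} for all τ (an h-increasing sum-subsequence of length p), or there exists such a sequence with t ≥ q and s_τ ≥ h·s_{τ+1} for all τ (an h-decreasing sum-subsequence of length q). -/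
/-!
Induction on `p + q`, over an arbitrary interval `(a, b]` at least as long as
`N(p, q) = 2 ^ (∑_{k<p} h^k + ∑_{k<q} h^k)`. As `N(p, q) = 2 ^ h ^ (p-1) * N(p-1, q)` and
`2 h ≤ 2 ^ h ^ (p-1)`, the interval has room for `h` blocks of length `N(p-1, q)` at its left end
and `h` blocks of length `N(p, q-1)` at its right end, all disjoint. If `h` times the sum over some
left block is at most the sum over everything to its right, the induction hypothesis inside the
block gives a decreasing sum-subsequence of length `q`, or an increasing one of length `p-1` that
this remainder extends. The same holds for a right block and everything to its left. If no block
qualifies, the sum beyond the `j`-th left block shrinks by a factor `h / (h + 1)` at each step,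
so beyond all `h` of them less than half of the total is left, as `(1 + 1/h)^h ≥ 2`; likewise
before the right blocks, but these two parts cover `(a, b]`.
-/

open Finset

namespace SumSubseq

lemma two_mul_le_two_pow (n : ℕ) : 2 * n ≤ 2 ^ n := by
  cases n with
  | zero => simp
  | succ n => rw [pow_succ']; have := Nat.lt_two_pow_self (n := n); omega

lemma two_mul_pow_le_add_one_pow {n : ℕ} (hn : 0 < n) : 2 * n ^ n ≤ (n + 1) ^ n := by
  have := pow_add_mul_le_add_pow (a := n) (b := 1) (Nat.zero_le n) (Nat.zero_le _) n
  rwa [Nat.cast_id, mul_one, mul_pow_sub_one hn.ne', ← two_mul] at this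

lemma pow_mul_lt_pow_mul_of_forall_lt {c : ℝ} (hc : 0 ≤ c) {T : ℕ → ℝ} {n : ℕ} (hn : 0 < n)
    (hT : ∀ j < n, (c + 1) * T (j + 1) < c * T j) : (c + 1) ^ n * T n < c ^ n * T 0 := by
  induction n, hn using Nat.le_induction with
  | base => simpa using hT 0 one_pos
  | succ n hn ih =>
    calc (c + 1) ^ (n + 1) * T (n + 1) = (c + 1) ^ n * ((c + 1) * T (n + 1)) := by ring
      _ < (c + 1) ^ n * (c * T n) := mul_lt_mul_of_pos_left (hT n (by omega)) (by positivity)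
      _ = c * ((c + 1) ^ n * T n) := by ring
      _ ≤ c * (c ^ n * T 0) := mul_le_mul_of_nonneg_left (ih fun j hj => hT j (by omega)).le hc
      _ = c ^ (n + 1) * T 0 := by ring

lemma two_mul_lt_of_forall_lt {h : ℕ} (hh : 0 < h) {T : ℕ → ℝ} (hTh : 0 ≤ T h)
    (hT : ∀ j < h, ((h : ℝ) + 1) * T (j + 1) < h * T j) : 2 * T h < T 0 := by
  have hdecay := pow_mul_lt_pow_mul_of_forall_lt (Nat.cast_nonneg h) hh hT
  have hbern : 2 * (h : ℝ) ^ h ≤ ((h : ℝ) + 1) ^ h := by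
    exact_mod_cast two_mul_pow_le_add_one_pow hh
  have : (h : ℝ) ^ h * (2 * T h) < (h : ℝ) ^ h * T 0 := by
    calc (h : ℝ) ^ h * (2 * T h) = 2 * (h : ℝ) ^ h * T h := by ring
      _ ≤ ((h : ℝ) + 1) ^ h * T h := by gcongr
      _ < (h : ℝ) ^ h * T 0 := hdecay
  exact lt_of_mul_lt_mul_left this (by positivity)

def bound (h p q : ℕ) : ℕ := 2 ^ (∑ k ∈ range p, h ^ k + ∑ k ∈ range q, h ^ k)

lemma bound_pos (h p q : ℕ) : 0 < bound h p q := by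
  unfold bound; positivity

lemma lt_of_add_bound_le {h p q a b : ℕ} (hab : a + bound h p q ≤ b) : a < b :=
  (Nat.lt_add_of_pos_right (bound_pos h p q)).trans_le hab

lemma bound_comm (h p q : ℕ) : bound h p q = bound h q p := by
  rw [bound, bound, add_comm]

lemma two_mul_mul_bound_le_bound_succ_left (h : ℕ) {p : ℕ} (hp : 0 < p) (q : ℕ) :
    2 * (h * bound h p q) ≤ bound h (p + 1) q := by
  have hsplit : bound h (p + 1) q = 2 ^ h ^ p * bound h p q := by
    rw [bound, bound, sum_range_succ, ← pow_add]
    ring_nf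
  have hle : 2 * h ≤ 2 ^ h ^ p :=
    (two_mul_le_two_pow h).trans (Nat.pow_le_pow_right two_pos (Nat.le_self_pow hp.ne' h))
  rw [hsplit, ← mul_assoc]
  exact Nat.mul_le_mul_right _ hle

lemma two_mul_mul_bound_le_bound_succ_right (h p : ℕ) {q : ℕ} (hq : 0 < q) :
    2 * (h * bound h p q) ≤ bound h p (q + 1) := by
  rw [bound_comm h p q, bound_comm h p (q + 1)]
  exact two_mul_mul_bound_le_bound_succ_left h hq p

section BlockSum

variable {r : ℕ → ℝ} {a b : ℕ}

def blockSum (r : ℕ → ℝ) (x y : ℕ) : ℝ := ∑ k ∈ Ioc x y, r k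

lemma blockSum_add_blockSum {x y z : ℕ} (hxy : x ≤ y) (hyz : y ≤ z) :
    blockSum r x y + blockSum r y z = blockSum r x z :=
  sum_Ioc_consecutive r hxy hyz

lemma blockSum_nonneg (hr : ∀ k ∈ Ioc a b, 0 ≤ r k) : 0 ≤ blockSum r a b :=
  sum_nonneg hr

lemma blockSum_le_blockSum (hr : ∀ k ∈ Ioc a b, 0 ≤ r k) {u v x y : ℕ}
    (hau : a ≤ u) (hux : u ≤ x) (hyv : y ≤ v) (hvb : v ≤ b) :
    blockSum r x y ≤ blockSum r u v :=
  sum_le_sum_of_subset_of_nonneg (Ioc_subset_Ioc hux hyv) fun k hk _ =>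
    hr k (Ioc_subset_Ioc hau hvb hk)

lemma two_mul_blockSum_lt_of_forall_lt_left {h L : ℕ} (hh : 0 < h)
    (hr : ∀ k ∈ Ioc a b, 0 ≤ r k) (hab : a + h * L ≤ b)
    (hlt : ∀ j < h,
      blockSum r (a + (j + 1) * L) b < h * blockSum r (a + j * L) (a + (j + 1) * L)) :
    2 * blockSum r (a + h * L) b < blockSum r a b := by
  simpa using two_mul_lt_of_forall_lt (T := fun j => blockSum r (a + j * L) b) hh
    (blockSum_nonneg fun k hk => hr k (Ioc_subset_Ioc_left (by omega) hk)) fun j hj => by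
      have : (j + 1) * L ≤ h * L := Nat.mul_le_mul_right L hj
      have : j * L ≤ (j + 1) * L := Nat.mul_le_mul_right L j.le_succ
      rw [← blockSum_add_blockSum (x := a + j * L) (y := a + (j + 1) * L) (z := b)
        (by omega) (by omega)]
      linarith [hlt j hj]

lemma two_mul_blockSum_lt_of_forall_lt_right {h L : ℕ} (hh : 0 < h)
    (hr : ∀ k ∈ Ioc a b, 0 ≤ r k) (hab : a + h * L ≤ b)
    (hlt : ∀ j < h,
      blockSum r a (b - (j + 1) * L) < h * blockSum r (b - (j + 1) * L) (b - j * L)) :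
    2 * blockSum r a (b - h * L) < blockSum r a b := by
  simpa using two_mul_lt_of_forall_lt (T := fun j => blockSum r a (b - j * L)) hh
    (blockSum_nonneg fun k hk => hr k (Ioc_subset_Ioc_right (by omega) hk)) fun j hj => by
      have : (j + 1) * L ≤ h * L := Nat.mul_le_mul_right L hj
      have : j * L ≤ (j + 1) * L := Nat.mul_le_mul_right L j.le_succ
      rw [← blockSum_add_blockSum (x := a) (y := b - (j + 1) * L) (z := b - j * L)
        (by omega) (by omega)]
      linarith [hlt j hj]

lemma exists_block_le_tail_or_block_le_head {h L₁ L₂ : ℕ} (hh : 0 < h)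
    (hr : ∀ k ∈ Ioc a b, 0 ≤ r k) (hab : a + h * L₁ + h * L₂ ≤ b) :
    (∃ j < h,
      h * blockSum r (a + j * L₁) (a + (j + 1) * L₁) ≤ blockSum r (a + (j + 1) * L₁) b) ∨
    (∃ j < h,
      h * blockSum r (b - (j + 1) * L₂) (b - j * L₂) ≤ blockSum r a (b - (j + 1) * L₂)) := by
  by_contra! hlt
  have htail := two_mul_blockSum_lt_of_forall_lt_left hh hr (by omega) hlt.1
  have hhead := two_mul_blockSum_lt_of_forall_lt_right hh hr (by omega) hlt.2
  have hcover : blockSum r a (a + h * L₁) ≤ blockSum r a (b - h * L₂) :=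
    blockSum_le_blockSum hr le_rfl le_rfl (by omega) (by omega)
  have := blockSum_add_blockSum (r := r) (le_add_right le_rfl) (show a + h * L₁ ≤ b by omega)
  linarith

end BlockSum

section Subsequences

/-- The cut points `i 0 < ⋯ < i n` lie in `[a, b]` and cut out the blocks `(i τ, i (τ + 1)]`. -/
def HasIncSumSubseq (r : ℕ → ℝ) (c : ℝ) (a b n : ℕ) : Prop :=
  ∃ i : ℕ → ℕ, a ≤ i 0 ∧ (∀ τ < n, i τ < i (τ + 1)) ∧ i n ≤ b ∧
    ∀ τ, τ + 1 < n → c * blockSum r (i τ) (i (τ + 1)) ≤ blockSum r (i (τ + 1)) (i (τ + 2))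

def HasDecSumSubseq (r : ℕ → ℝ) (c : ℝ) (a b n : ℕ) : Prop :=
  ∃ i : ℕ → ℕ, a ≤ i 0 ∧ (∀ τ < n, i τ < i (τ + 1)) ∧ i n ≤ b ∧
    ∀ τ, τ + 1 < n → c * blockSum r (i (τ + 1)) (i (τ + 2)) ≤ blockSum r (i τ) (i (τ + 1))

variable {r : ℕ → ℝ} {c : ℝ} {a b a' b' n : ℕ}

lemma le_of_forall_lt_succ {i : ℕ → ℕ} (hi : ∀ τ < n, i τ < i (τ + 1)) {σ τ : ℕ}
    (hστ : σ ≤ τ) (hτ : τ ≤ n) : i σ ≤ i τ :=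
  (strictMonoOn_Iic_of_lt_succ hi).monotoneOn (Set.mem_Iic.2 (hστ.trans hτ)) hτ hστ

lemma hasIncSumSubseq_one (hab : a < b) : HasIncSumSubseq r c a b 1 :=
  ⟨fun τ => a + τ, le_rfl, fun _ _ => by dsimp only; omega, by simpa, fun _ _ => by omega⟩

lemma hasDecSumSubseq_one (hab : a < b) : HasDecSumSubseq r c a b 1 :=
  ⟨fun τ => a + τ, le_rfl, fun _ _ => by dsimp only; omega, by simpa, fun _ _ => by omega⟩

lemma HasIncSumSubseq.mono (H : HasIncSumSubseq r c a' b' n) (ha : a ≤ a') (hb : b' ≤ b) :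
    HasIncSumSubseq r c a b n :=
  let ⟨i, h0, hi, hn, hinc⟩ := H
  ⟨i, ha.trans h0, hi, hn.trans hb, hinc⟩

lemma HasDecSumSubseq.mono (H : HasDecSumSubseq r c a' b' n) (ha : a ≤ a') (hb : b' ≤ b) :
    HasDecSumSubseq r c a b n :=
  let ⟨i, h0, hi, hn, hdec⟩ := H
  ⟨i, ha.trans h0, hi, hn.trans hb, hdec⟩

lemma HasIncSumSubseq.snoc (H : HasIncSumSubseq r c a b' n) (hc : 0 ≤ c)
    (hr : ∀ k ∈ Ioc a b, 0 ≤ r k) (hb' : b' < b)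
    (hblock : c * blockSum r a b' ≤ blockSum r b' b) :
    HasIncSumSubseq r c a b (n + 1) := by
  obtain ⟨i, h0, hi, hn, hinc⟩ := H
  refine ⟨fun τ => if τ ≤ n then i τ else b, by simpa, fun τ hτ => ?_, by simp, fun τ hτ => ?_⟩
  · rcases Nat.lt_or_eq_of_le (Nat.le_of_lt_succ hτ) with hτ | rfl
    · simpa [hτ.le, Nat.succ_le_of_lt hτ] using hi τ hτ
    · simpa using hn.trans_lt hb'
  · rcases Nat.lt_or_ge (τ + 1) n with hτ' | hτ'
    · simpa [show τ ≤ n by omega, hτ'.le, Nat.succ_le_of_lt hτ'] using hinc τ hτ'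
    obtain rfl : n = τ + 1 := by omega
    have h0τ := le_of_forall_lt_succ hi (Nat.zero_le τ) (Nat.le_succ τ)
    have h0τ' := le_of_forall_lt_succ hi (Nat.zero_le (τ + 1)) le_rfl
    simp only [τ.le_succ, le_rfl, ↓reduceIte, show ¬τ + 2 ≤ τ + 1 by omega]
    calc c * blockSum r (i τ) (i (τ + 1)) ≤ c * blockSum r a b' :=
          mul_le_mul_of_nonneg_left
            (blockSum_le_blockSum hr le_rfl (h0.trans h0τ) hn hb'.le) hc
      _ ≤ blockSum r b' b := hblock
      _ ≤ blockSum r (i (τ + 1)) b := blockSum_le_blockSum hr (by omega) hn le_rfl le_rfl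

lemma HasDecSumSubseq.cons (H : HasDecSumSubseq r c a' b n) (hc : 0 ≤ c)
    (hr : ∀ k ∈ Ioc a b, 0 ≤ r k) (ha' : a < a')
    (hblock : c * blockSum r a' b ≤ blockSum r a a') :
    HasDecSumSubseq r c a b (n + 1) := by
  obtain ⟨i, h0, hi, hn, hdec⟩ := H
  refine ⟨fun | 0 => a | τ + 1 => i τ, le_rfl, ?_, hn, ?_⟩
  · rintro (_ | τ) hτ
    · exact ha'.trans_le h0
    · exact hi τ (by omega)
  · rintro (_ | τ) hτ
    · have h1n := le_of_forall_lt_succ hi (Nat.le_of_lt_succ hτ) le_rfl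
      have h0n := le_of_forall_lt_succ hi (Nat.zero_le n) le_rfl
      calc c * blockSum r (i 0) (i 1) ≤ c * blockSum r a' b :=
            mul_le_mul_of_nonneg_left
              (blockSum_le_blockSum hr ha'.le h0 (h1n.trans hn) le_rfl) hc
        _ ≤ blockSum r a a' := hblock
        _ ≤ blockSum r a (i 0) := blockSum_le_blockSum hr le_rfl le_rfl h0 (by omega)
    · exact hdec τ (by omega)

end Subsequences

lemma hasIncSumSubseq_or_hasDecSumSubseq_succ_succ {h : ℕ} (hh : 0 < h) {r : ℕ → ℝ} {p q : ℕ}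
    (ihp : ∀ {a b}, a + bound h (p + 1) (q + 2) ≤ b → (∀ k ∈ Ioc a b, 0 ≤ r k) →
      HasIncSumSubseq r h a b (p + 1) ∨ HasDecSumSubseq r h a b (q + 2))
    (ihq : ∀ {a b}, a + bound h (p + 2) (q + 1) ≤ b → (∀ k ∈ Ioc a b, 0 ≤ r k) →
      HasIncSumSubseq r h a b (p + 2) ∨ HasDecSumSubseq r h a b (q + 1))
    {a b : ℕ} (hab : a + bound h (p + 2) (q + 2) ≤ b) (hr : ∀ k ∈ Ioc a b, 0 ≤ r k) :
    HasIncSumSubseq r h a b (p + 2) ∨ HasDecSumSubseq r h a b (q + 2) := by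
  set L₁ := bound h (p + 1) (q + 2)
  set L₂ := bound h (p + 2) (q + 1)
  have hL₁ : 2 * (h * L₁) ≤ bound h (p + 2) (q + 2) :=
    two_mul_mul_bound_le_bound_succ_left h p.succ_pos (q + 2)
  have hL₂ : 2 * (h * L₂) ≤ bound h (p + 2) (q + 2) :=
    two_mul_mul_bound_le_bound_succ_right h (p + 2) q.succ_pos
  have hL₁pos := bound_pos h (p + 1) (q + 2)
  have hL₂pos := bound_pos h (p + 2) (q + 1)
  have hh' : (0 : ℝ) ≤ h := Nat.cast_nonneg h
  rcases exists_block_le_tail_or_block_le_head (r := r) hh hr (L₁ := L₁) (L₂ := L₂) (by omega)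
    with ⟨j, hj, hblock⟩ | ⟨j, hj, hblock⟩
  · have hjL : (j + 1) * L₁ ≤ h * L₁ := Nat.mul_le_mul_right L₁ hj
    have hsucc : (j + 1) * L₁ = j * L₁ + L₁ := Nat.succ_mul j L₁
    have hsub : ∀ k ∈ Ioc (a + j * L₁) b, 0 ≤ r k := fun k hk =>
      hr k (Ioc_subset_Ioc_left (Nat.le_add_right a _) hk)
    rcases ihp (a := a + j * L₁) (b := a + (j + 1) * L₁) (by omega)
        (fun k hk => hsub k (Ioc_subset_Ioc_right (by omega) hk)) with hinc | hdec
    · exact .inl ((hinc.snoc hh' hsub (by omega) hblock).mono (Nat.le_add_right a _) le_rfl)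
    · exact .inr (hdec.mono (Nat.le_add_right a _) (by omega))
  · have hjL : (j + 1) * L₂ ≤ h * L₂ := Nat.mul_le_mul_right L₂ hj
    have hsucc : (j + 1) * L₂ = j * L₂ + L₂ := Nat.succ_mul j L₂
    have hsub : ∀ k ∈ Ioc a (b - j * L₂), 0 ≤ r k := fun k hk =>
      hr k (Ioc_subset_Ioc_right (Nat.sub_le b _) hk)
    rcases ihq (a := b - (j + 1) * L₂) (b := b - j * L₂) (by omega)
        (fun k hk => hsub k (Ioc_subset_Ioc_left (by omega) hk)) with hinc | hdec
    · exact .inl (hinc.mono (by omega) (Nat.sub_le b _))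
    · exact .inr ((hdec.cons hh' hsub (by omega) hblock).mono le_rfl (Nat.sub_le b _))

theorem hasIncSumSubseq_or_hasDecSumSubseq {h : ℕ} (hh : 0 < h) {r : ℕ → ℝ} (p q : ℕ)
    {a b : ℕ} (hab : a + bound h (p + 1) (q + 1) ≤ b) (hr : ∀ k ∈ Ioc a b, 0 ≤ r k) :
    HasIncSumSubseq r h a b (p + 1) ∨ HasDecSumSubseq r h a b (q + 1) := by
  induction p generalizing q a b with
  | zero => exact .inl (hasIncSumSubseq_one (lt_of_add_bound_le hab))
  | succ p ihp =>
    induction q generalizing a b with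
    | zero => exact .inr (hasDecSumSubseq_one (lt_of_add_bound_le hab))
    | succ q ihq =>
      exact hasIncSumSubseq_or_hasDecSumSubseq_succ_succ hh (ihp (q + 1)) ihq hab hr

end SumSubseq

/-- If `m = 2^(∑_{k<p} h^k + ∑_{k<q} h^k)`, then a sequence of positive reals
`r 1, …, r m` contains an `h`-increasing sum-subsequence of length `p` or an
`h`-decreasing sum-subsequence of length `q`. -/
theorem stmt0 (m h p q : ℕ) (hh : 0 < h) (hp : 0 < p) (hq : 0 < q)
    (r : ℕ → ℝ) (hr : ∀ k, 1 ≤ k → k ≤ m → 0 < r k)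
    (hm : m = 2 ^ (∑ k ∈ Finset.range p, h ^ k + ∑ k ∈ Finset.range q, h ^ k)) :
    (∃ i : ℕ → ℕ, (∀ τ, τ < p → i τ < i (τ + 1)) ∧ i p ≤ m ∧
      ∀ τ, τ + 1 < p →
        (h : ℝ) * ∑ k ∈ Finset.Icc (i τ + 1) (i (τ + 1)), r k ≤
          ∑ k ∈ Finset.Icc (i (τ + 1) + 1) (i (τ + 2)), r k) ∨
    (∃ i : ℕ → ℕ, (∀ τ, τ < q → i τ < i (τ + 1)) ∧ i q ≤ m ∧
      ∀ τ, τ + 1 < q →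
        (h : ℝ) * ∑ k ∈ Finset.Icc (i (τ + 1) + 1) (i (τ + 2)), r k ≤
          ∑ k ∈ Finset.Icc (i τ + 1) (i (τ + 1)), r k) := by
  obtain ⟨p, rfl⟩ := Nat.exists_eq_add_one_of_ne_zero hp.ne'
  obtain ⟨q, rfl⟩ := Nat.exists_eq_add_one_of_ne_zero hq.ne'
  have hnonneg : ∀ k ∈ Ioc 0 m, 0 ≤ r k := fun k hk =>
    (hr k (mem_Ioc.1 hk).1 (mem_Ioc.1 hk).2).le
  simp only [Icc_add_one_left_eq_Ioc]
  rcases SumSubseq.hasIncSumSubseq_or_hasDecSumSubseq hh p q (by rw [zero_add, hm]; rfl) hnonneg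
    with ⟨i, -, hi, him, hinc⟩ | ⟨i, -, hi, him, hdec⟩
  · exact .inl ⟨i, hi, him, hinc⟩
  · exact .inr ⟨i, hi, him, hdec⟩
end

section
/- Let w ∈ R^2 and let (v_1, ..., v_n) be a proper sequence (with indices taken cyclically, v_{n+1} = v_1). If there exist distinct indices p_1, p_2 such that Δ(w, v_{p_i - 1}, v_{p_i}) · Δ(w, v_{p_i}, v_{p_i + 1}) < 0 for i = 1, 2, then for every index q ∉ {p_1, p_2} it holds that Δ(w, v_{q-1}, v_q) · Δ(w, v_q, v_{q+1}) > 0. -/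
open EuclideanGeometry Real Finset

noncomputable section

/-- Points of the plane. -/
abbrev Pt : Type := EuclideanSpace ℝ (Fin 2)

/-- `Δ(a,b,c)`: the oriented area of the parallelepiped spanned by `a - b` and `c - b`. -/
def tdet (a b c : Pt) : ℝ :=
  (a 0 - b 0) * (c 1 - b 1) - (a 1 - b 1) * (c 0 - b 0)

/-- `β(a,b,c) = π - ∠(a,b,c)`, where `∠` is the unsigned angle at `b`. -/
def beta (a b c : Pt) : ℝ := Real.pi - EuclideanGeometry.angle a b c

/-- Cyclic successor on `{1, …, n}`. -/
def cyc (n j : ℕ) : ℕ := if j = n then 1 else j + 1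

/-- Cyclic predecessor on `{1, …, n}`. -/
def cycPred (n j : ℕ) : ℕ := if j = 1 then n else j - 1

/-- `(v 1, …, v n)` is a proper sequence: `Δ(v₁,v₂,v₃) > 0` and every segment
`conv{v_j, v_{j+1}}` (indices cyclic) is an edge of the convex hull of the points,
i.e. it is the set of maximizers of some linear functional over the points. -/
def Proper (n : ℕ) (v : ℕ → Pt) : Prop :=
  0 < tdet (v 1) (v 2) (v 3) ∧
  ∀ j, 1 ≤ j → j ≤ n →
    ∃ (ℓ : Pt →ₗ[ℝ] ℝ) (c : ℝ), ℓ (v j) = c ∧ ℓ (v (cyc n j)) = c ∧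
      ∀ k, 1 ≤ k → k ≤ n → k ≠ j → k ≠ cyc n j → ℓ (v k) < c

/-- `(v 1, …, v n)` is `θ`-thin. -/
def Thin (n : ℕ) (v : ℕ → Pt) (θ : ℝ) : Prop :=
  ∑ k ∈ Finset.Icc 2 (n - 1), beta (v (k - 1)) (v k) (v (k + 1)) ≤ θ

/-- The edge sequence of `(v 1, …, v n)` is `h`-decreasing. -/
def EdgeDecr (n : ℕ) (v : ℕ → Pt) (h : ℝ) : Prop :=
  ∀ k, 1 ≤ k → k + 2 ≤ n → h * dist (v (k + 1)) (v (k + 2)) ≤ dist (v k) (v (k + 1))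

/-! Every edge of a proper sequence is a supporting line with the other vertices strictly on
one side, so `Δ(v_k, v_j, v_{j+1})` has one sign for fixed `j`; starting from
`Δ(v₁, v₂, v₃) > 0` this sign propagates around the polygon, giving
`Δ(v_k, v_j, v_{j+1}) > 0` for every edge and every other vertex.

Put `T_q(x) = Δ(v_q, w, x)`. The identity
`Δ(v_{q-1}, v_q, v_{q+1}) T_q(v_k) = Δ(v_k, v_q, v_{q+1}) T_q(v_{q-1}) + Δ(v_{q-1}, v_q, v_k) T_q(v_{q+1})`
writes `T_q(v_k)` as a nonnegative combination of `T_q(v_{q-1})` and `T_q(v_{q+1})`. So when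
the hypothesis holds at `q`, all other vertices lie strictly on one side of the line `w v_q`,
and when the conclusion fails at `q` they lie weakly on one side. Three such vertices
`p₁, p₂, q` contradict the antisymmetry `T_a(v_b) = -T_b(v_a)`. -/

lemma tdet_rotate (a b c : Pt) : tdet a b c = tdet b c a := by
  unfold tdet; ring

lemma tdet_swap (a b c : Pt) : tdet a b c = -tdet c b a := by
  unfold tdet; ring

lemma tdet_self_left (a c : Pt) : tdet a a c = 0 := by
  unfold tdet; ring

lemma tdet_self_right (a b : Pt) : tdet a b a = 0 := by
  unfold tdet; ring

lemma tdet_mul_tdet_eq_neg (w a b c : Pt) :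
    tdet w a b * tdet w b c = -(tdet b w a * tdet b w c) := by
  unfold tdet; ring

lemma tdet_mul_eq_add (w a b c x : Pt) :
    tdet b a c * tdet a w x = tdet x a c * tdet a w b + tdet b a x * tdet a w c := by
  unfold tdet; ring

lemma linearMap_apply_eq (ℓ : Pt →ₗ[ℝ] ℝ) (z : Pt) :
    ℓ z = z 0 * ℓ (EuclideanSpace.single 0 1) + z 1 * ℓ (EuclideanSpace.single 1 1) := by
  have hz : z = z 0 • EuclideanSpace.single (0 : Fin 2) (1 : ℝ)
      + z 1 • EuclideanSpace.single (1 : Fin 2) (1 : ℝ) := by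
    ext i
    fin_cases i <;> simp
  conv_lhs => rw [hz]
  simp only [map_add, map_smul, smul_eq_mul]

/-- Both sides are affine functions of `x` and `y` vanishing on the line through `a` and `b`. -/
lemma tdet_mul_sub_eq (ℓ : Pt →ₗ[ℝ] ℝ) {a b : Pt} (hab : ℓ a = ℓ b) (x y : Pt) :
    tdet x a b * (ℓ y - ℓ a) = tdet y a b * (ℓ x - ℓ a) := by
  rw [linearMap_apply_eq ℓ a, linearMap_apply_eq ℓ b] at hab
  simp only [tdet, linearMap_apply_eq ℓ x, linearMap_apply_eq ℓ y, linearMap_apply_eq ℓ a]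
  linear_combination (-((x 0 - a 0) * (y 1 - a 1) - (x 1 - a 1) * (y 0 - a 0))) * hab

section Cyclic

variable {n j : ℕ}

lemma cyc_mem (hn : 1 ≤ n) (hj : j ≤ n) : 1 ≤ cyc n j ∧ cyc n j ≤ n := by
  unfold cyc; split_ifs <;> omega

lemma cycPred_mem (hn : 1 ≤ n) (hj1 : 1 ≤ j) (hj : j ≤ n) :
    1 ≤ cycPred n j ∧ cycPred n j ≤ n := by
  unfold cycPred; split_ifs <;> omega

lemma cyc_of_lt (hj : j < n) : cyc n j = j + 1 := by
  unfold cyc; split_ifs <;> omega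

lemma cyc_ne_self (hn : 2 ≤ n) : cyc n j ≠ j := by
  unfold cyc; split_ifs <;> omega

lemma cyc_cyc_ne_self (hn : 3 ≤ n) : cyc n (cyc n j) ≠ j := by
  unfold cyc; split_ifs <;> omega

lemma cycPred_ne_self (hn : 2 ≤ n) (hj1 : 1 ≤ j) : cycPred n j ≠ j := by
  unfold cycPred; split_ifs <;> omega

lemma cycPred_ne_cyc (hn : 3 ≤ n) (hj1 : 1 ≤ j) : cycPred n j ≠ cyc n j := by
  unfold cyc cycPred; split_ifs <;> omega

lemma cyc_cycPred (hj1 : 1 ≤ j) (hj : j ≤ n) : cyc n (cycPred n j) = j := by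
  unfold cyc cycPred; split_ifs <;> omega

end Cyclic

def IsConvexPolygon (n : ℕ) (v : ℕ → Pt) : Prop :=
  ∀ j, 1 ≤ j → j ≤ n → ∀ k, 1 ≤ k → k ≤ n → k ≠ j → k ≠ cyc n j →
    0 < tdet (v k) (v j) (v (cyc n j))

namespace Proper

variable {n : ℕ} {v : ℕ → Pt}

lemma tdet_edge_pos_of_pos (hv : Proper n v) {j : ℕ} (hj1 : 1 ≤ j) (hjn : j ≤ n)
    {k₀ : ℕ} (hk₀1 : 1 ≤ k₀) (hk₀n : k₀ ≤ n) (hk₀j : k₀ ≠ j) (hk₀c : k₀ ≠ cyc n j)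
    (hpos : 0 < tdet (v k₀) (v j) (v (cyc n j))) {k : ℕ} (hk1 : 1 ≤ k) (hkn : k ≤ n)
    (hkj : k ≠ j) (hkc : k ≠ cyc n j) : 0 < tdet (v k) (v j) (v (cyc n j)) := by
  obtain ⟨ℓ, c, hj, hc, hlt⟩ := hv.2 j hj1 hjn
  have hsub₀ : ℓ (v k₀) - ℓ (v j) < 0 := by linarith [hlt k₀ hk₀1 hk₀n hk₀j hk₀c]
  have hsub : ℓ (v k) - ℓ (v j) < 0 := by linarith [hlt k hk1 hkn hkj hkc]
  have hprod : tdet (v k) (v j) (v (cyc n j)) * (ℓ (v k₀) - ℓ (v j)) < 0 := by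
    rw [tdet_mul_sub_eq ℓ (hj.trans hc.symm)]
    exact mul_neg_of_pos_of_neg hpos hsub
  exact pos_of_mul_neg_left hprod hsub₀.le

lemma isConvexPolygon (hn : 3 ≤ n) (hv : Proper n v) : IsConvexPolygon n v := by
  intro j hj1
  induction j, hj1 using Nat.le_induction with
  | base =>
    have hc1 : cyc n 1 = 2 := cyc_of_lt (by omega)
    intro _ k hk1 hkn hk1' hk2
    refine hv.tdet_edge_pos_of_pos le_rfl (by omega) (k₀ := 3) (by omega) hn
      (by omega) (by omega) ?_ hk1 hkn hk1' hk2
    rw [hc1, tdet_rotate]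
    exact hv.1
  | succ j hj1 ih =>
    intro hjn k hk1 hkn hkj hkc
    have hc : cyc n j = j + 1 := cyc_of_lt (by omega)
    have hj2 := cyc_mem (n := n) (j := j + 1) (by omega) hjn
    have hpos := ih (by omega) (cyc n (j + 1)) hj2.1 hj2.2
      (by rw [← hc]; exact cyc_cyc_ne_self hn)
      (by rw [hc]; exact cyc_ne_self (by omega))
    rw [hc, tdet_rotate] at hpos
    have hjc : j ≠ cyc n (j + 1) := by rw [← hc]; exact (cyc_cyc_ne_self hn).symm
    exact hv.tdet_edge_pos_of_pos (by omega) hjn hj1 (by omega) (by omega) hjc hpos hk1 hkn hkj hkc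

end Proper

lemma mul_nonneg_of_nonneg_combinations {d s t x y α β γ δ : ℝ} (hd : 0 < d)
    (hα : 0 ≤ α) (hβ : 0 ≤ β) (hγ : 0 ≤ γ) (hδ : 0 ≤ δ)
    (hx : d * x = α * s + β * t) (hy : d * y = γ * s + δ * t) (hst : 0 ≤ s * t) :
    0 ≤ x * y := by
  have h : 0 ≤ (d * x) * (d * y) := by
    rw [hx, hy]
    nlinarith [mul_nonneg (mul_nonneg hα hγ) (sq_nonneg s),
      mul_nonneg (mul_nonneg hβ hδ) (sq_nonneg t),
      mul_nonneg (add_nonneg (mul_nonneg hα hδ) (mul_nonneg hβ hγ)) hst]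
  nlinarith [mul_pos hd hd]

lemma mul_add_mul_pos {a b s t : ℝ} (ha : 0 ≤ a) (hb : 0 ≤ b) (hab : 0 < a + b)
    (hs : 0 < s) (ht : 0 < t) : 0 < a * s + b * t := by
  nlinarith [mul_le_mul_of_nonneg_left (min_le_left s t) ha,
    mul_le_mul_of_nonneg_left (min_le_right s t) hb, mul_pos hab (lt_min hs ht)]

lemma mul_pos_of_pos_combinations {d s t x y α β γ δ : ℝ}
    (hα : 0 ≤ α) (hβ : 0 ≤ β) (hγ : 0 ≤ γ) (hδ : 0 ≤ δ) (hαβ : 0 < α + β) (hγδ : 0 < γ + δ)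
    (hx : d * x = α * s + β * t) (hy : d * y = γ * s + δ * t) (hst : 0 < s * t) :
    0 < x * y := by
  have h : 0 < (d * x) * (d * y) := by
    rw [hx, hy]
    rcases mul_pos_iff.1 hst with ⟨hs, ht⟩ | ⟨hs, ht⟩
    · exact mul_pos (mul_add_mul_pos hα hβ hαβ hs ht) (mul_add_mul_pos hγ hδ hγδ hs ht)
    · have := mul_pos (mul_add_mul_pos hα hβ hαβ (neg_pos.2 hs) (neg_pos.2 ht))
        (mul_add_mul_pos hγ hδ hγδ (neg_pos.2 hs) (neg_pos.2 ht))
      linarith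
  nlinarith [sq_nonneg d]

namespace IsConvexPolygon

variable {n : ℕ} {v : ℕ → Pt}

lemma tdet_nonneg (hv : IsConvexPolygon n v) {j k : ℕ} (hj1 : 1 ≤ j) (hjn : j ≤ n)
    (hk1 : 1 ≤ k) (hkn : k ≤ n) : 0 ≤ tdet (v k) (v j) (v (cyc n j)) := by
  by_cases hkj : k = j
  · rw [hkj, tdet_self_left]
  by_cases hkc : k = cyc n j
  · rw [hkc, tdet_self_right]
  exact (hv j hj1 hjn k hk1 hkn hkj hkc).le

lemma tdet_cycPred_nonneg (hv : IsConvexPolygon n v) {q k : ℕ} (hq1 : 1 ≤ q) (hqn : q ≤ n)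
    (hk1 : 1 ≤ k) (hkn : k ≤ n) : 0 ≤ tdet (v (cycPred n q)) (v q) (v k) := by
  have hqm := cycPred_mem (by omega) hq1 hqn
  have h := hv.tdet_nonneg hqm.1 hqm.2 hk1 hkn
  rwa [cyc_cycPred hq1 hqn, tdet_rotate] at h

lemma tdet_add_tdet_pos (hn : 3 ≤ n) (hv : IsConvexPolygon n v) {q k : ℕ} (hq1 : 1 ≤ q)
    (hqn : q ≤ n) (hk1 : 1 ≤ k) (hkn : k ≤ n) (hkq : k ≠ q) :
    0 < tdet (v k) (v q) (v (cyc n q)) + tdet (v (cycPred n q)) (v q) (v k) := by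
  by_cases hkc : k = cyc n q
  · have hqm := cycPred_mem (by omega) hq1 hqn
    have h := hv _ hqm.1 hqm.2 k hk1 hkn
      (by rw [hkc]; exact (cycPred_ne_cyc hn hq1).symm) (by rwa [cyc_cycPred hq1 hqn])
    rw [cyc_cycPred hq1 hqn, tdet_rotate] at h
    exact add_pos_of_nonneg_of_pos (hv.tdet_nonneg hq1 hqn hk1 hkn) h
  · exact add_pos_of_pos_of_nonneg (hv q hq1 hqn k hk1 hkn hkq hkc)
      (hv.tdet_cycPred_nonneg hq1 hqn hk1 hkn)

lemma tdet_cycPred_pos (hn : 3 ≤ n) (hv : IsConvexPolygon n v) {q : ℕ} (hq1 : 1 ≤ q)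
    (hqn : q ≤ n) : 0 < tdet (v (cycPred n q)) (v q) (v (cyc n q)) := by
  have hqm := cycPred_mem (by omega) hq1 hqn
  exact hv q hq1 hqn _ hqm.1 hqm.2 (cycPred_ne_self (by omega) hq1) (cycPred_ne_cyc hn hq1)

lemma tdet_mul_tdet_nonneg (hn : 3 ≤ n) (hv : IsConvexPolygon n v) {w : Pt} {q : ℕ}
    (hq1 : 1 ≤ q) (hqn : q ≤ n)
    (hq : tdet w (v (cycPred n q)) (v q) * tdet w (v q) (v (cyc n q)) ≤ 0)
    {k l : ℕ} (hk1 : 1 ≤ k) (hkn : k ≤ n) (hl1 : 1 ≤ l) (hln : l ≤ n) :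
    0 ≤ tdet (v q) w (v k) * tdet (v q) w (v l) := by
  rw [tdet_mul_tdet_eq_neg] at hq
  exact mul_nonneg_of_nonneg_combinations (hv.tdet_cycPred_pos hn hq1 hqn)
    (hv.tdet_nonneg hq1 hqn hk1 hkn) (hv.tdet_cycPred_nonneg hq1 hqn hk1 hkn)
    (hv.tdet_nonneg hq1 hqn hl1 hln) (hv.tdet_cycPred_nonneg hq1 hqn hl1 hln)
    (tdet_mul_eq_add w _ _ _ _) (tdet_mul_eq_add w _ _ _ _) (by linarith)

lemma tdet_mul_tdet_pos (hn : 3 ≤ n) (hv : IsConvexPolygon n v) {w : Pt} {q : ℕ}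
    (hq1 : 1 ≤ q) (hqn : q ≤ n)
    (hq : tdet w (v (cycPred n q)) (v q) * tdet w (v q) (v (cyc n q)) < 0)
    {k l : ℕ} (hk1 : 1 ≤ k) (hkn : k ≤ n) (hl1 : 1 ≤ l) (hln : l ≤ n) (hkq : k ≠ q)
    (hlq : l ≠ q) : 0 < tdet (v q) w (v k) * tdet (v q) w (v l) := by
  rw [tdet_mul_tdet_eq_neg] at hq
  exact mul_pos_of_pos_combinations
    (hv.tdet_nonneg hq1 hqn hk1 hkn) (hv.tdet_cycPred_nonneg hq1 hqn hk1 hkn)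
    (hv.tdet_nonneg hq1 hqn hl1 hln) (hv.tdet_cycPred_nonneg hq1 hqn hl1 hln)
    (hv.tdet_add_tdet_pos hn hq1 hqn hk1 hkn hkq) (hv.tdet_add_tdet_pos hn hq1 hqn hl1 hln hlq)
    (tdet_mul_eq_add w _ _ _ _) (tdet_mul_eq_add w _ _ _ _) (by linarith)

end IsConvexPolygon

/-- If the two lines through `w` supporting the polygon touch it at `v_{p₁}` and
`v_{p₂}` (in the sense that `Δ` changes sign there), then at every other vertex
`v_q` the two consecutive oriented areas have the same sign. -/
theorem stmt3 (n : ℕ) (hn : 3 ≤ n) (v : ℕ → Pt) (hv : Proper n v) (w : Pt)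
    (p₁ p₂ : ℕ) (hp₁ : 1 ≤ p₁) (hp₁n : p₁ ≤ n) (hp₂ : 1 ≤ p₂) (hp₂n : p₂ ≤ n)
    (hne : p₁ ≠ p₂)
    (h1 : tdet w (v (cycPred n p₁)) (v p₁) * tdet w (v p₁) (v (cyc n p₁)) < 0)
    (h2 : tdet w (v (cycPred n p₂)) (v p₂) * tdet w (v p₂) (v (cyc n p₂)) < 0)
    (q : ℕ) (hq : 1 ≤ q) (hqn : q ≤ n) (hq1 : q ≠ p₁) (hq2 : q ≠ p₂) :
    0 < tdet w (v (cycPred n q)) (v q) * tdet w (v q) (v (cyc n q)) := by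
  have hconv := hv.isConvexPolygon hn
  by_contra hcon
  have hside₁ := hconv.tdet_mul_tdet_pos hn hp₁ hp₁n h1 hp₂ hp₂n hq hqn hne.symm hq1
  have hside₂ := hconv.tdet_mul_tdet_pos hn hp₂ hp₂n h2 hp₁ hp₁n hq hqn hne hq2
  have hside := hconv.tdet_mul_tdet_nonneg hn hq hqn (not_lt.1 hcon) hp₁ hp₁n hp₂ hp₂n
  rw [tdet_swap (v p₂) w (v p₁)] at hside₂
  rw [tdet_swap (v q) w (v p₁), tdet_swap (v q) w (v p₂)] at hside
  nlinarith [mul_pos hside₁ hside₂, mul_nonneg (sq_nonneg (tdet (v p₁) w (v p₂))) hside]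
end
end

section
/- Let (v_1, ..., v_n) be a proper sequence in R^2 that is 1-thin, i.e., Σ_{k=2}^{n-1} β(v_{k-1}, v_k, v_{k+1}) ≤ 1, where β(a,b,c) = π − ∠(a,b,c). Then 2·d(v_1, v_n) > d(v_1, v_2) + d(v_2, v_3) + ... + d(v_{n-1}, v_n). -/
/-! By the triangle inequality for angles, the direction of every edge differs from that of the
first edge by at most the accumulated turning `∑ β ≤ 1`. Hence each edge projects onto the first
edge's direction with at least `cos 1 > 1 / 2` of its length, and summing, the projection of
`v n - v 1` alone exceeds half the length of the path. -/

open EuclideanGeometry Real Finset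

noncomputable section

section InnerProductSpace

open RealInnerProductSpace

variable {V : Type*} [NormedAddCommGroup V] [InnerProductSpace ℝ V]

theorem pi_sub_angle_eq_angle_sub (a b c : V) :
    π - ∠ a b c = InnerProductGeometry.angle (b - a) (c - b) := by
  rw [← neg_sub a b, InnerProductGeometry.angle_neg_left]
  rfl

theorem angle_sub_le_sum_pi_sub_angle (v : ℕ → V) (h : v 2 ≠ v 1) {k : ℕ} (hk : 1 ≤ k) :
    InnerProductGeometry.angle (v 2 - v 1) (v (k + 1) - v k) ≤
      ∑ j ∈ Icc 2 k, (π - ∠ (v (j - 1)) (v j) (v (j + 1))) := by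
  induction k, hk using Nat.le_induction with
  | base => simp [InnerProductGeometry.angle_self (sub_ne_zero.2 h)]
  | succ k hk ih =>
    rw [sum_Icc_succ_top (by omega), Nat.add_sub_cancel, pi_sub_angle_eq_angle_sub]
    exact (InnerProductGeometry.angle_le_angle_add_angle _ (v (k + 1) - v k) _).trans (by gcongr)

theorem cos_mul_sum_norm_le_norm_sum {ι : Type*} (s : Finset ι) (w : ι → V) {e : V}
    (he : e ≠ 0) {θ : ℝ} (hθ : θ ≤ π) (hw : ∀ i ∈ s, InnerProductGeometry.angle e (w i) ≤ θ) :
    cos θ * ∑ i ∈ s, ‖w i‖ ≤ ‖∑ i ∈ s, w i‖ := by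
  have hinner : ∀ i ∈ s, cos θ * (‖e‖ * ‖w i‖) ≤ ⟪e, w i⟫ := fun i hi => by
    rw [← InnerProductGeometry.cos_angle_mul_norm_mul_norm]
    gcongr
    exact cos_le_cos_of_nonneg_of_le_pi (InnerProductGeometry.angle_nonneg _ _) hθ (hw i hi)
  refine le_of_mul_le_mul_left ?_ (norm_pos_iff.2 he)
  calc ‖e‖ * (cos θ * ∑ i ∈ s, ‖w i‖) = ∑ i ∈ s, cos θ * (‖e‖ * ‖w i‖) := by
        rw [mul_sum, mul_sum]; congr 1; ext; ring
    _ ≤ ∑ i ∈ s, ⟪e, w i⟫ := sum_le_sum hinner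
    _ = ⟪e, ∑ i ∈ s, w i⟫ := (inner_sum _ _ _).symm
    _ ≤ ‖e‖ * ‖∑ i ∈ s, w i‖ := real_inner_le_norm _ _

end InnerProductSpace

theorem one_half_lt_cos_one : 1 / 2 < cos 1 := by
  rw [← cos_pi_div_three]
  exact cos_lt_cos_of_nonneg_of_le_pi (by norm_num) (by linarith [pi_gt_three])
    (by linarith [pi_gt_three])

theorem Thin.sum_Icc_le {n : ℕ} {v : ℕ → Pt} {θ : ℝ} (h : Thin n v θ) {k : ℕ}
    (hk : k ≤ n - 1) :
    ∑ j ∈ Icc 2 k, beta (v (j - 1)) (v j) (v (j + 1)) ≤ θ :=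
  (sum_le_sum_of_subset_of_nonneg (Icc_subset_Icc_right hk)
    fun _ _ _ => sub_nonneg.2 (angle_le_pi _ _ _)).trans h

theorem stmt4_general (n : ℕ) (hn : 3 ≤ n) (v : ℕ → Pt)
    (hthin : Thin n v 1) :
    ∑ k ∈ Finset.Icc 1 (n - 1), dist (v k) (v (k + 1)) < 2 * dist (v 1) (v n) := by
  -- a degenerate edge `v 2 = v 1` would give `∠ (v 1) (v 2) (v 3) = π / 2`, so `β > 1`
  have hE : v 2 ≠ v 1 := fun h => by
    have := hthin.sum_Icc_le (k := 2) (by omega)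
    simp only [Icc_self, sum_singleton, beta, h, angle_self_left] at this
    linarith [pi_gt_three]
  have hdrift : ∀ k ∈ Icc 1 (n - 1),
      InnerProductGeometry.angle (v 2 - v 1) (v (k + 1) - v k) ≤ 1 := fun k hk =>
    (angle_sub_le_sum_pi_sub_angle v hE (mem_Icc.1 hk).1).trans
      (hthin.sum_Icc_le (mem_Icc.1 hk).2)
  have hcos := cos_mul_sum_norm_le_norm_sum _ _ (sub_ne_zero.2 hE)
    (by linarith [pi_gt_three]) hdrift
  rw [sum_Icc_sub (by omega), Nat.sub_add_cancel (by omega : 1 ≤ n)] at hcos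
  have hpos : 0 < ∑ k ∈ Icc 1 (n - 1), ‖v (k + 1) - v k‖ :=
    (norm_pos_iff.2 (sub_ne_zero.2 hE)).trans_le <|
      single_le_sum (f := fun k => ‖v (k + 1) - v k‖) (fun _ _ => norm_nonneg _)
        (mem_Icc.2 ⟨le_rfl, by omega⟩)
  simp only [fun a b : Pt => (dist_comm a b).trans (dist_eq_norm b a)]
  nlinarith [one_half_lt_cos_one]

/-- For a proper `1`-thin sequence, twice the distance between the endpoints
exceeds the total length of the path along the edges. -/
theorem stmt4 (n : ℕ) (hn : 3 ≤ n) (v : ℕ → Pt) (hv : Proper n v)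
    (hthin : Thin n v 1) :
    ∑ k ∈ Finset.Icc 1 (n - 1), dist (v k) (v (k + 1)) < 2 * dist (v 1) (v n) :=
  stmt4_general n hn v hthin
end
end

section
/- Let (v_1, ..., v_n) be a proper θ-thin sequence in R^2 with θ < 1. Then any subsequence (v_{i_1}, ..., v_{i_m}) (with i_1 < ... < i_m) is also θ-thin. In fact Σ_{k=2}^{n-1} β(v_{k-1}, v_k, v_{k+1}) = α(v_2, v_1, v_n) + α(v_1, v_n, v_{n-1}). -/
/-!
A proper sequence is in convex position: for every edge `v j, v (j+1)` all other points lie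
strictly on its positive side (`tdet > 0`), by induction along the chain starting from
`Δ(v₁,v₂,v₃) > 0`. Fanning the convex polygon `v a, …, v b` into triangles from `v a` gives
`α(v_{a+1}, v_a, v_b) + α(v_a, v_b, v_{b-1}) = Σ_{a<k<b} β_k`; for `a = 1`, `b = n` this is the
identity. For a subsequence, the triangle inequality for angles bounds each
`β(v_a, v_b, v_c)` by `α(v_a, v_b, v_{b-1}) + β_b + α(v_{b+1}, v_b, v_c)`, and by the identity
these boundary angles telescope into `Σ_{i₁<k<i_m} β_k ≤ θ`.
-/

open EuclideanGeometry Real Finset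

noncomputable section

lemma ne_of_tdet_pos {a b c : Pt} (h : 0 < tdet a b c) : a ≠ b ∧ b ≠ c ∧ c ≠ a := by
  refine ⟨?_, ?_, ?_⟩ <;> rintro rfl <;> unfold tdet at h <;> linarith

lemma beta_eq_angle (a b c : Pt) : beta a b c = InnerProductGeometry.angle (b - a) (c - b) := by
  rw [beta, EuclideanGeometry.angle, vsub_eq_sub, vsub_eq_sub, ← neg_sub a b,
    InnerProductGeometry.angle_neg_left]

lemma beta_nonneg (a b c : Pt) : 0 ≤ beta a b c :=
  beta_eq_angle a b c ▸ InnerProductGeometry.angle_nonneg _ _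

lemma beta_le_angle_add_beta_add_angle (a p b q c : Pt) :
    beta a b c ≤ ∠ a b p + beta p b q + ∠ q b c := by
  have h₁ := InnerProductGeometry.angle_le_angle_add_angle (b - a) (b - p) (c - b)
  have h₂ := InnerProductGeometry.angle_le_angle_add_angle (b - p) (q - b) (c - b)
  have e : InnerProductGeometry.angle (b - a) (b - p) = ∠ a b p := by
    rw [← InnerProductGeometry.angle_neg_neg, neg_sub, neg_sub]; rfl
  rw [beta_eq_angle, beta_eq_angle]
  change _ ≤ _ + _ + InnerProductGeometry.angle (q - b) (c - b)
  linarith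

lemma angle_eq_angle_add_angle_of_tdet {p q₁ q₂ q₃ : Pt} (hq₂ : q₂ ≠ p)
    (h₁₂ : 0 ≤ tdet p q₁ q₂) (h₂₃ : 0 ≤ tdet p q₂ q₃) (h₁₃ : 0 < tdet p q₁ q₃) :
    ∠ q₁ p q₃ = ∠ q₁ p q₂ + ∠ q₂ p q₃ := by
  refine InnerProductGeometry.angle_eq_angle_add_add_angle_add_of_mem_span
    (vsub_ne_zero.2 hq₂) (Submodule.mem_span_pair.2 ?_)
  have cramer :
      tdet p q₁ q₃ • (q₂ -ᵥ p) = tdet p q₂ q₃ • (q₁ -ᵥ p) + tdet p q₁ q₂ • (q₃ -ᵥ p) := by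
    ext i
    fin_cases i <;> simp [tdet] <;> ring
  refine ⟨⟨_, div_nonneg h₂₃ h₁₃.le⟩, ⟨_, div_nonneg h₁₂ h₁₃.le⟩, ?_⟩
  change (tdet p q₂ q₃ / tdet p q₁ q₃) • (q₁ -ᵥ p) + (tdet p q₁ q₂ / tdet p q₁ q₃) • (q₃ -ᵥ p) =
    q₂ -ᵥ p
  rw [div_eq_inv_mul, div_eq_inv_mul, mul_smul, mul_smul, ← smul_add, ← cramer,
    inv_smul_smul₀ h₁₃.ne']

lemma exists_sub_eq_mul_tdet (ℓ : Pt →ₗ[ℝ] ℝ) {p q : Pt} (hpq : p ≠ q) (h : ℓ p = ℓ q) :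
    ∃ μ : ℝ, ∀ x, ℓ x - ℓ p = μ * tdet p q x := by
  have hℓ : ∀ x : Pt, ℓ x = x 0 * ℓ (EuclideanSpace.single 0 1) +
      x 1 * ℓ (EuclideanSpace.single 1 1) := by
    intro x
    conv_lhs => rw [← (EuclideanSpace.basisFun (Fin 2) ℝ).sum_repr x]
    simp [Fin.sum_univ_two]
  set A := ℓ (EuclideanSpace.single 0 1)
  set B := ℓ (EuclideanSpace.single 1 1)
  rw [hℓ, hℓ] at h
  have hd : p 0 ≠ q 0 ∨ p 1 ≠ q 1 := by
    by_contra! h'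
    exact hpq (by ext i; fin_cases i <;> simp [h'.1, h'.2])
  rcases hd with hd | hd
  · refine ⟨B / (p 0 - q 0), fun x => ?_⟩
    rw [hℓ, hℓ, tdet]
    field_simp [sub_ne_zero.2 hd]
    linear_combination (x 0 - p 0) * h
  · refine ⟨-A / (p 1 - q 1), fun x => ?_⟩
    rw [hℓ, hℓ, tdet]
    field_simp [sub_ne_zero.2 hd]
    linear_combination (x 1 - p 1) * h

def turn (v : ℕ → Pt) (k : ℕ) : ℝ := beta (v (k - 1)) (v k) (v (k + 1))

lemma turn_nonneg (v : ℕ → Pt) (k : ℕ) : 0 ≤ turn v k := beta_nonneg _ _ _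

lemma sum_beta_eq_sum_turn (n : ℕ) (v : ℕ → Pt) :
    ∑ k ∈ Icc 2 (n - 1), beta (v (k - 1)) (v k) (v (k + 1)) = ∑ k ∈ Ioo 1 n, turn v k := by
  refine sum_congr ?_ fun _ _ => rfl
  ext k
  simp only [mem_Icc, mem_Ioo]
  omega

lemma thin_iff {n : ℕ} {v : ℕ → Pt} {θ : ℝ} : Thin n v θ ↔ ∑ k ∈ Ioo 1 n, turn v k ≤ θ := by
  rw [Thin, sum_beta_eq_sum_turn]

lemma sum_Ioo_add_add_sum_Ioo {M : Type*} [AddCommMonoid M] (f : ℕ → M) {a b c : ℕ}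
    (hab : a < b) (hbc : b < c) :
    ∑ k ∈ Ioo a b, f k + f b + ∑ k ∈ Ioo b c, f k = ∑ k ∈ Ioo a c, f k := by
  simp only [← Ico_add_one_left_eq_Ioo]
  rw [add_assoc, ← sum_eq_sum_Ico_succ_bot hbc, sum_Ico_consecutive _ (by omega) hbc.le]

lemma sum_Ioo_succ_top {M : Type*} [AddCommMonoid M] {a b : ℕ} (hab : a < b) (f : ℕ → M) :
    ∑ k ∈ Ioo a (b + 1), f k = ∑ k ∈ Ioo a b, f k + f b := by
  simp only [← Ico_add_one_left_eq_Ioo]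
  exact sum_Ico_succ_top hab f

namespace Proper

variable {n : ℕ} {v : ℕ → Pt}

lemma tdet_pos_of_tdet_pos (hv : Proper n v) {j k l : ℕ} (hj : 1 ≤ j) (hjn : j < n)
    (hk : 1 ≤ k) (hkn : k ≤ n) (hkj : k ≠ j) (hkj' : k ≠ j + 1)
    (hl : 1 ≤ l) (hln : l ≤ n) (hlj : l ≠ j) (hlj' : l ≠ j + 1)
    (hpos : 0 < tdet (v j) (v (j + 1)) (v k)) : 0 < tdet (v j) (v (j + 1)) (v l) := by
  obtain ⟨ℓ, c, hℓj, hℓj', hℓ⟩ := hv.2 j hj hjn.le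
  rw [cyc, if_neg hjn.ne] at hℓj' hℓ
  obtain ⟨μ, hμ⟩ := exists_sub_eq_mul_tdet ℓ (ne_of_tdet_pos hpos).1 (hℓj.trans hℓj'.symm)
  have hμk := hμ (v k)
  have hμl := hμ (v l)
  have hk' := hℓ k hk hkn hkj hkj'
  have hl' := hℓ l hl hln hlj hlj'
  rw [hℓj] at hμk hμl
  nlinarith

theorem tdet_pos (hn : 3 ≤ n) (hv : Proper n v) {j k : ℕ} (hj : 1 ≤ j) (hjn : j < n)
    (hk : 1 ≤ k) (hkn : k ≤ n) (hkj : k ≠ j) (hkj' : k ≠ j + 1) :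
    0 < tdet (v j) (v (j + 1)) (v k) := by
  induction j, hj using Nat.le_induction generalizing k with
  | base =>
    exact hv.tdet_pos_of_tdet_pos (k := 3) le_rfl hjn (by omega) hn (by omega) (by omega)
      hk hkn hkj hkj' hv.1
  | succ j hj ih =>
    have h := ih (k := j + 2) (by omega) (by omega) (by omega) (by omega) (by omega)
    rw [tdet_rotate] at h
    exact hv.tdet_pos_of_tdet_pos (k := j) (by omega) hjn (by omega) (by omega) (by omega)
      (by omega) hk hkn hkj hkj' h

theorem tdet_nonneg (hn : 3 ≤ n) (hv : Proper n v) {j k : ℕ} (hj : 1 ≤ j) (hjn : j < n)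
    (hk : 1 ≤ k) (hkn : k ≤ n) : 0 ≤ tdet (v j) (v (j + 1)) (v k) := by
  by_cases hkj : k = j ∨ k = j + 1
  · rcases hkj with rfl | rfl <;> unfold tdet <;> linarith
  exact (hv.tdet_pos hn hj hjn hk hkn (not_or.1 hkj).1 (not_or.1 hkj).2).le

theorem apply_ne (hn : 3 ≤ n) (hv : Proper n v) {a b : ℕ} (ha : 1 ≤ a) (hab : a < b)
    (hbn : b ≤ n) : v a ≠ v b := by
  rcases (Nat.succ_le_of_lt hab).eq_or_lt with rfl | hab'
  · exact (ne_of_tdet_pos (hv.tdet_pos hn ha (by omega) (k := if a = 1 then 3 else 1)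
      (by split_ifs <;> omega) (by split_ifs <;> omega) (by split_ifs <;> omega)
      (by split_ifs <;> omega))).1
  · exact ((ne_of_tdet_pos (hv.tdet_pos hn ha (by omega) (by omega) hbn (by omega)
      hab'.ne')).2.2).symm

theorem angle_add_angle_eq_sum_turn (hn : 3 ≤ n) (hv : Proper n v) {a b : ℕ} (ha : 1 ≤ a)
    (hab : a < b) (hbn : b ≤ n) :
    ∠ (v (a + 1)) (v a) (v b) + ∠ (v a) (v b) (v (b - 1)) = ∑ k ∈ Ioo a b, turn v k := by
  induction b, (show a + 1 ≤ b from hab) using Nat.le_induction with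
  | base =>
    have hne := hv.apply_ne hn ha (Nat.lt_succ_self a) hbn
    rw [Nat.add_sub_cancel, angle_self_of_ne hne.symm, angle_self_of_ne hne,
      ← Ico_add_one_left_eq_Ioo, Ico_self, sum_empty, add_zero]
  | succ b hb ih =>
    obtain ⟨c, rfl⟩ : ∃ c, b = c + 1 := ⟨b - 1, by omega⟩
    simp only [Nat.add_sub_cancel] at ih
    show ∠ (v (a + 1)) (v a) (v (c + 2)) + ∠ (v a) (v (c + 2)) (v (c + 1)) =
      ∑ k ∈ Ioo a (c + 2), turn v k
    have IH := ih (by omega) (by omega)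
    have hac := hv.apply_ne hn ha (b := c + 1) (by omega) (by omega)
    have split_a : ∠ (v (a + 1)) (v a) (v (c + 2)) =
        ∠ (v (a + 1)) (v a) (v (c + 1)) + ∠ (v (c + 1)) (v a) (v (c + 2)) :=
      angle_eq_angle_add_angle_of_tdet hac.symm
        (hv.tdet_nonneg hn ha (by omega) (by omega) (by omega))
        (by rw [tdet_rotate]; exact hv.tdet_nonneg hn (by omega) (by omega) ha (by omega))
        (hv.tdet_pos hn ha (by omega) (by omega) (by omega) (by omega) (by omega))
    have split_c : ∠ (v c) (v (c + 1)) (v (c + 2)) =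
        ∠ (v (c + 2)) (v (c + 1)) (v a) + ∠ (v a) (v (c + 1)) (v c) := by
      rw [angle_comm]
      exact angle_eq_angle_add_angle_of_tdet hac
        (hv.tdet_nonneg hn (by omega) (by omega) ha (by omega))
        (by rw [← tdet_rotate]; exact hv.tdet_nonneg hn (by omega) (by omega) ha (by omega))
        (hv.tdet_pos hn (by omega) (by omega) (by omega) (by omega) (by omega) (by omega))
    have triangle := angle_add_angle_add_angle_eq_pi (v (c + 2)) hac
    have hturn : turn v (c + 1) = π - ∠ (v c) (v (c + 1)) (v (c + 2)) := rfl
    rw [sum_Ioo_succ_top (by omega), ← IH, hturn]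
    linarith

theorem sum_turn_comp_add_angle_add_angle_le (hn : 3 ≤ n) (hv : Proper n v) {m : ℕ}
    {i : ℕ → ℕ} (hi : StrictMonoOn i (Set.Icc 1 m)) (h1 : 1 ≤ i 1) (hm : i m ≤ n) {M : ℕ}
    (hM : 2 ≤ M) (hMm : M ≤ m) :
    ∑ k ∈ Ioo 1 M, turn (fun k => v (i k)) k + ∠ (v (i 1 + 1)) (v (i 1)) (v (i 2)) +
      ∠ (v (i (M - 1))) (v (i M)) (v (i M - 1)) ≤ ∑ k ∈ Ioo (i 1) (i M), turn v k := by
  have hlt {a b : ℕ} (ha : 1 ≤ a) (hab : a < b) (hbm : b ≤ m) : i a < i b :=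
    hi ⟨ha, by omega⟩ ⟨by omega, hbm⟩ hab
  have hle {a : ℕ} (ha : 1 ≤ a) (ham : a ≤ m) : i a ≤ n :=
    (hi.monotoneOn ⟨ha, ham⟩ ⟨by omega, le_rfl⟩ ham).trans hm
  induction M, hM using Nat.le_induction with
  | base =>
    rw [show Ioo 1 2 = ∅ by decide, sum_empty, zero_add]
    exact (hv.angle_add_angle_eq_sum_turn hn h1 (hlt le_rfl one_lt_two hMm)
      (hle (by omega) hMm)).le
  | succ M hM ih =>
    have IH := ih (by omega)
    have h1M : i 1 < i M := hlt le_rfl (by omega) (by omega)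
    have hMM : i M < i (M + 1) := hlt (by omega) (by omega) hMm
    have hbeta : turn (fun k => v (i k)) M ≤ ∠ (v (i (M - 1))) (v (i M)) (v (i M - 1)) +
        turn v (i M) + ∠ (v (i M + 1)) (v (i M)) (v (i (M + 1))) :=
      beta_le_angle_add_beta_add_angle _ _ _ _ _
    have hturn := hv.angle_add_angle_eq_sum_turn hn (by omega) hMM (hle (by omega) hMm)
    rw [Nat.add_sub_cancel, sum_Ioo_succ_top (by omega),
      ← sum_Ioo_add_add_sum_Ioo _ h1M hMM]
    linarith

theorem sum_turn_comp_le (hn : 3 ≤ n) (hv : Proper n v) {m : ℕ} {i : ℕ → ℕ}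
    (hi : StrictMonoOn i (Set.Icc 1 m)) (h1 : 1 ≤ i 1) (hm : i m ≤ n) :
    ∑ k ∈ Ioo 1 m, turn (fun k => v (i k)) k ≤ ∑ k ∈ Ioo 1 n, turn v k := by
  rcases lt_or_ge m 2 with hm2 | hm2
  · rw [Ioo_eq_empty_of_le (by omega), sum_empty]
    exact sum_nonneg fun k _ => turn_nonneg v k
  have h := hv.sum_turn_comp_add_angle_add_angle_le hn hi h1 hm hm2 le_rfl
  calc ∑ k ∈ Ioo 1 m, turn (fun k => v (i k)) k
      ≤ ∑ k ∈ Ioo (i 1) (i m), turn v k := by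
        linarith [angle_nonneg (v (i 1 + 1)) (v (i 1)) (v (i 2)),
          angle_nonneg (v (i (m - 1))) (v (i m)) (v (i m - 1))]
    _ ≤ ∑ k ∈ Ioo 1 n, turn v k :=
        sum_le_sum_of_subset_of_nonneg (Ioo_subset_Ioo h1 hm) fun k _ _ => turn_nonneg v k

end Proper

theorem stmt6_general (n : ℕ) (hn : 3 ≤ n) (θ : ℝ)
    (v : ℕ → Pt) (hv : Proper n v) (hthin : Thin n v θ) :
    (∀ (m : ℕ) (i : ℕ → ℕ), (∀ a b, 1 ≤ a → a < b → b ≤ m → i a < i b) →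
      1 ≤ i 1 → i m ≤ n → Thin m (fun k => v (i k)) θ) ∧
    ∑ k ∈ Finset.Icc 2 (n - 1), beta (v (k - 1)) (v k) (v (k + 1)) =
      EuclideanGeometry.angle (v 2) (v 1) (v n) +
        EuclideanGeometry.angle (v 1) (v n) (v (n - 1)) := by
  rw [thin_iff] at hthin
  refine ⟨fun m i hi h1 hm => thin_iff.2 (le_trans ?_ hthin), ?_⟩
  · exact hv.sum_turn_comp_le hn (fun a ha b hb hab => hi a b ha.1 hab hb.2) h1 hm
  · rw [sum_beta_eq_sum_turn]
    exact (hv.angle_add_angle_eq_sum_turn hn le_rfl (by omega) le_rfl).symm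

/-- Any subsequence of a proper `θ`-thin sequence (`θ < 1`) is `θ`-thin; in
fact the sum of the angles `β` equals `α(v₂,v₁,v_n) + α(v₁,v_n,v_{n-1})`. -/
theorem stmt6 (n : ℕ) (hn : 3 ≤ n) (θ : ℝ) (hθ : θ < 1)
    (v : ℕ → Pt) (hv : Proper n v) (hthin : Thin n v θ) :
    (∀ (m : ℕ) (i : ℕ → ℕ), (∀ a b, 1 ≤ a → a < b → b ≤ m → i a < i b) →
      1 ≤ i 1 → i m ≤ n → Thin m (fun k => v (i k)) θ) ∧
    ∑ k ∈ Finset.Icc 2 (n - 1), beta (v (k - 1)) (v k) (v (k + 1)) =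
      EuclideanGeometry.angle (v 2) (v 1) (v n) +
        EuclideanGeometry.angle (v 1) (v n) (v (n - 1)) :=
  stmt6_general n hn θ v hv hthin
end
end
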